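/- In 4-dimensional Minkowski space, define for a Weyl-like tensor C and null frame ℓ, n, m_2, m_3 the complex variables z_± = (z_2 ± i z_3)/√2 and the complex polynomial Ψ(z_2, z_3) = C̃_{0202}(z) + i C̃_{0203}(z), where C̃_{ABCD}(z) are the components after a null rotation about n with parameter z. Then ∂Ψ/∂z_− = 0; i.e., Ψ depends holomorphically on z_+ alone and is a polynomial of degree at most 4 in z_+. -/

import Mathlib

open scoped Matrix BigOperators

/-- The Minkowski metric matrix of signature (-,+,+,+) on ℝ⁴. -/
noncomputable def minkMetric (n : ℕ) : Matrix (Fin n) (Fin n) ℝ :=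
  Matrix.diagonal (fun i => if (i : ℕ) = 0 then -1 else 1)

/-- Minkowski inner product on ℝ^n. -/
noncomputable def mip {n : ℕ} (u v : Fin n → ℝ) : ℝ :=
  u ⬝ᵥ (minkMetric n).mulVec v

/-- The standard basis vector `e_a` of ℝ^n. -/
noncomputable def std {n : ℕ} (a : Fin n) : Fin n → ℝ := Pi.single a 1

/-! ### Auxiliary lemmas -/

lemma upd0 (a b c d x : Fin 4 → ℝ) : Function.update ![a,b,c,d] 0 x = ![x,b,c,d] := by
  funext i; fin_cases i <;> simp

lemma upd1 (a b c d x : Fin 4 → ℝ) : Function.update ![a,b,c,d] 1 x = ![a,x,c,d] := by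
  funext i; fin_cases i <;> simp

lemma upd2 (a b c d x : Fin 4 → ℝ) : Function.update ![a,b,c,d] 2 x = ![a,b,x,d] := by
  funext i; fin_cases i <;> simp

lemma upd3 (a b c d x : Fin 4 → ℝ) : Function.update ![a,b,c,d] 3 x = ![a,b,c,x] := by
  funext i; fin_cases i <;> simp

lemma pi_decomp (x : Fin 4 → ℝ) : x = ∑ j, x j • std j := by
  have h : ∀ j : Fin 4, x j • std j = Pi.single j (x j) := fun j => by
    rw [std, ← Pi.single_smul, smul_eq_mul, mul_one]
  simp_rw [h]
  exact (Finset.univ_sum_single x).symm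

lemma slotE (C : MultilinearMap ℝ (fun _ : Fin 4 => (Fin 4 → ℝ)) ℝ)
    (m : Fin 4 → (Fin 4 → ℝ)) (i : Fin 4) (x : Fin 4 → ℝ) :
    C (Function.update m i x) = ∑ j, x j * C (Function.update m i (std j)) := by
  conv_lhs => rw [pi_decomp x]
  rw [C.map_update_sum]
  exact Finset.sum_congr rfl fun j _ => by rw [C.map_update_smul, smul_eq_mul]

lemma slot0 (C : MultilinearMap ℝ (fun _ : Fin 4 => (Fin 4 → ℝ)) ℝ) (w x y z : Fin 4 → ℝ) :
    C ![w,x,y,z] = ∑ i, w i * C ![std i, x, y, z] := by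
  have h := slotE C ![w,x,y,z] 0 w
  simpa only [upd0] using h

lemma slot1 (C : MultilinearMap ℝ (fun _ : Fin 4 => (Fin 4 → ℝ)) ℝ) (w x y z : Fin 4 → ℝ) :
    C ![w,x,y,z] = ∑ i, x i * C ![w, std i, y, z] := by
  have h := slotE C ![w,x,y,z] 1 x
  simpa only [upd1] using h

lemma slot2 (C : MultilinearMap ℝ (fun _ : Fin 4 => (Fin 4 → ℝ)) ℝ) (w x y z : Fin 4 → ℝ) :
    C ![w,x,y,z] = ∑ i, y i * C ![w, x, std i, z] := by
  have h := slotE C ![w,x,y,z] 2 y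
  simpa only [upd2] using h

lemma slot3 (C : MultilinearMap ℝ (fun _ : Fin 4 => (Fin 4 → ℝ)) ℝ) (w x y z : Fin 4 → ℝ) :
    C ![w,x,y,z] = ∑ i, z i * C ![w, x, y, std i] := by
  have h := slotE C ![w,x,y,z] 3 z
  simpa only [upd3] using h

lemma expand4 (C : MultilinearMap ℝ (fun _ : Fin 4 => (Fin 4 → ℝ)) ℝ) (w x y z : Fin 4 → ℝ) :
    C ![w,x,y,z] = ∑ i, ∑ j, ∑ k, ∑ l,
      (w i * x j * y k * z l) * C ![std i, std j, std k, std l] := by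
  rw [slot0 C w x y z]
  refine Finset.sum_congr rfl fun i _ => ?_
  rw [slot1 C (std i) x y z, Finset.mul_sum]
  refine Finset.sum_congr rfl fun j _ => ?_
  rw [slot2 C (std i) (std j) y z, Finset.mul_sum, Finset.mul_sum]
  refine Finset.sum_congr rfl fun k _ => ?_
  rw [slot3 C (std i) (std j) (std k) z, Finset.mul_sum, Finset.mul_sum, Finset.mul_sum]
  exact Finset.sum_congr rfl fun l _ => by ring

lemma bexp (C : MultilinearMap ℝ (fun _ : Fin 4 => (Fin 4 → ℝ)) ℝ) (a u c v : Fin 4 → ℝ) :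
    C ![a,u,c,v] = ∑ i, ∑ j, (u i * v j) * C ![a, std i, c, std j] := by
  rw [slot1 C a u c v]
  refine Finset.sum_congr rfl fun i _ => ?_
  rw [slot3 C a (std i) c v, Finset.mul_sum]
  exact Finset.sum_congr rfl fun j _ => by ring

lemma hasDerivAt_C4 (C : MultilinearMap ℝ (fun _ : Fin 4 => (Fin 4 → ℝ)) ℝ)
    (a b c d : ℝ → (Fin 4 → ℝ)) (a' b' c' d' : Fin 4 → ℝ) (s : ℝ)
    (ha : ∀ i, HasDerivAt (fun t => a t i) (a' i) s)
    (hb : ∀ i, HasDerivAt (fun t => b t i) (b' i) s)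
    (hc : ∀ i, HasDerivAt (fun t => c t i) (c' i) s)
    (hd : ∀ i, HasDerivAt (fun t => d t i) (d' i) s) :
    HasDerivAt (fun t => C ![a t, b t, c t, d t])
      (C ![a', b s, c s, d s] + C ![a s, b', c s, d s]
        + C ![a s, b s, c', d s] + C ![a s, b s, c s, d']) s := by
  have key : HasDerivAt (fun t => ∑ i, ∑ j, ∑ k, ∑ l,
      (a t i * b t j * c t k * d t l) * C ![std i, std j, std k, std l])
      (∑ i : Fin 4, ∑ j : Fin 4, ∑ k : Fin 4, ∑ l : Fin 4,
        (((a' i * b s j + a s i * b' j) * c s k + a s i * b s j * c' k) * d s l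
          + a s i * b s j * c s k * d' l) * C ![std i, std j, std k, std l]) s := by
    refine HasDerivAt.fun_sum fun i _ => HasDerivAt.fun_sum fun j _ => HasDerivAt.fun_sum fun k _ =>
      HasDerivAt.fun_sum fun l _ => ?_
    exact ((((ha i).mul (hb j)).mul (hc k)).mul (hd l)).mul_const _
  have hfun : (fun t => C ![a t, b t, c t, d t]) = fun t => ∑ i, ∑ j, ∑ k, ∑ l,
      (a t i * b t j * c t k * d t l) * C ![std i, std j, std k, std l] :=
    funext fun t => expand4 C _ _ _ _
  rw [hfun]
  convert key using 1
  rw [expand4 C a' (b s) (c s) (d s), expand4 C (a s) b' (c s) (d s),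
    expand4 C (a s) (b s) c' (d s), expand4 C (a s) (b s) (c s) d']
  simp only [← Finset.sum_add_distrib]
  exact Finset.sum_congr rfl fun i _ => Finset.sum_congr rfl fun j _ =>
    Finset.sum_congr rfl fun k _ => Finset.sum_congr rfl fun l _ => by ring

lemma mipE (u v : Fin 4 → ℝ) :
    mip u v = ∑ a : Fin 4, (if (a : ℕ) = 0 then (-1:ℝ) else 1) * u a * v a := by
  unfold mip minkMetric
  unfold dotProduct
  exact Finset.sum_congr rfl fun a _ => by rw [Matrix.mulVec_diagonal]; ring

lemma mip_comm (u v : Fin 4 → ℝ) : mip u v = mip v u := by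
  rw [mipE, mipE]; exact Finset.sum_congr rfl fun a _ => by ring

lemma gram_entry (P : Matrix (Fin 4) (Fin 4) ℝ) (i j : Fin 4) :
    (P * minkMetric 4 * Pᵀ) i j = mip (fun k => P i k) (fun k => P j k) := by
  rw [mipE, Matrix.mul_apply]
  simp only [minkMetric, Matrix.mul_diagonal, Matrix.transpose_apply]
  exact Finset.sum_congr rfl fun a _ => by ring

lemma tgp_entry (P G : Matrix (Fin 4) (Fin 4) ℝ) (i j : Fin 4) :
    (Pᵀ * G * P) i j = ∑ m : Fin 4, ∑ k : Fin 4, G k m * P k i * P m j := by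
  simp only [Matrix.mul_apply, Matrix.transpose_apply, Finset.sum_mul]
  exact Finset.sum_congr rfl fun m _ => Finset.sum_congr rfl fun k _ => by ring

lemma frame_complete (ℓ nn m2 m3 : Fin 4 → ℝ)
    (hln : mip ℓ nn = 1) (hll : mip ℓ ℓ = 0) (hnn : mip nn nn = 0)
    (hlm2 : mip ℓ m2 = 0) (hlm3 : mip ℓ m3 = 0)
    (hnm2 : mip nn m2 = 0) (hnm3 : mip nn m3 = 0)
    (hm22 : mip m2 m2 = 1) (hm33 : mip m3 m3 = 1) (hm23 : mip m2 m3 = 0) :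
    ∀ i j : Fin 4, ℓ i * nn j + nn i * ℓ j + m2 i * m2 j + m3 i * m3 j
      = if i = j then (if (i : ℕ) = 0 then (-1:ℝ) else 1) else 0 := by
  set P : Matrix (Fin 4) (Fin 4) ℝ := Matrix.of ![ℓ, nn, m2, m3] with hPdef
  set G : Matrix (Fin 4) (Fin 4) ℝ := !![0,1,0,0; 1,0,0,0; 0,0,1,0; 0,0,0,1] with hGdef
  have hrow : ∀ i : Fin 4, (fun k => P i k) = ![ℓ, nn, m2, m3] i := fun i => rfl
  have hGram : P * minkMetric 4 * Pᵀ = G := by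
    apply Matrix.ext
    intro i j
    rw [gram_entry, hrow, hrow]
    fin_cases i <;> fin_cases j <;> simp only [hGdef] <;> norm_num <;>
      first
        | assumption
        | (rw [mip_comm]; assumption)
  have hGG : G * G = 1 := by
    apply Matrix.ext
    intro i j
    fin_cases i <;> fin_cases j <;>
      simp [hGdef, Matrix.mul_apply, Fin.sum_univ_four, Matrix.one_apply, Matrix.vecHead,
        Matrix.vecTail]
  have hee : minkMetric 4 * minkMetric 4 = 1 := by
    rw [minkMetric, Matrix.diagonal_mul_diagonal]
    have h : (fun i : Fin 4 => (if (i:ℕ)=0 then (-1:ℝ) else 1) * (if (i:ℕ)=0 then (-1:ℝ) else 1))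
        = fun _ => 1 := by
      funext i; by_cases h : (i:ℕ) = 0 <;> simp [h]
    rw [h, Matrix.diagonal_one]
  have hQ : P * (minkMetric 4 * Pᵀ * G) = 1 := by
    calc P * (minkMetric 4 * Pᵀ * G) = P * minkMetric 4 * Pᵀ * G := by
          simp only [Matrix.mul_assoc]
      _ = G * G := by rw [hGram]
      _ = 1 := hGG
  have hQP : minkMetric 4 * Pᵀ * G * P = 1 := mul_eq_one_comm.mp hQ
  have hfinal : Pᵀ * G * P = minkMetric 4 := by
    calc Pᵀ * G * P = minkMetric 4 * (minkMetric 4 * Pᵀ * G * P) := by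
          simp only [← Matrix.mul_assoc, hee, Matrix.one_mul]
      _ = minkMetric 4 := by rw [hQP, Matrix.mul_one]
  intro i j
  have h := congrFun (congrFun hfinal i) j
  rw [tgp_entry] at h
  simp only [Fin.sum_univ_four, hGdef, hPdef, Matrix.of_apply,
    Matrix.cons_val_zero, Matrix.cons_val_one, Matrix.head_cons,
    Matrix.cons_val_two, Matrix.tail_cons, Matrix.cons_val_three, Matrix.cons_val',
    Matrix.empty_val', Matrix.cons_val_fin_one, Fin.isValue] at h
  rw [show minkMetric 4 i j = if i = j then (if (i:ℕ) = 0 then (-1:ℝ) else 1) else 0 from by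
    simp [minkMetric, Matrix.diagonal_apply]] at h
  rw [← h]
  norm_num
  ring

/-- in 4D, the complex polynomial
`Ψ(z₂,z₃) = C̃₀₂₀₂(z) + i C̃₀₂₀₃(z)` built from the null-rotated frame
satisfies `∂Ψ/∂z₋ = 0`, i.e. `(∂₂ + i ∂₃)Ψ = 0`: Ψ is holomorphic in
`z₊ = (z₂ + i z₃)/√2` alone. -/
theorem weyl_4d_psi_holomorphic
    (C : MultilinearMap ℝ (fun _ : Fin 4 => (Fin 4 → ℝ)) ℝ)
    -- Weyl-like symmetries
    (hA : ∀ a b c d, C ![a, b, c, d] = - C ![b, a, c, d])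
    (hP : ∀ a b c d, C ![a, b, c, d] = C ![c, d, a, b])
    (hB : ∀ a b c d, C ![a, b, c, d] + C ![a, c, d, b] + C ![a, d, b, c] = 0)
    (hT : ∀ a c, ∑ b : Fin 4,
      (if (b : ℕ) = 0 then (-1 : ℝ) else 1) * C ![a, std b, c, std b] = 0)
    -- null frame ℓ, n, m₂, m₃ on ℝ⁴
    (ℓ nn m2 m3 : Fin 4 → ℝ)
    (hln : mip ℓ nn = 1) (hll : mip ℓ ℓ = 0) (hnn : mip nn nn = 0)
    (hlm2 : mip ℓ m2 = 0) (hlm3 : mip ℓ m3 = 0)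
    (hnm2 : mip nn m2 = 0) (hnm3 : mip nn m3 = 0)
    (hm22 : mip m2 m2 = 1) (hm33 : mip m3 m3 = 1) (hm23 : mip m2 m3 = 0)
    -- the null-rotated frame, as a function of the rotation parameters z₂, z₃
    (L M2 M3 : ℝ → ℝ → (Fin 4 → ℝ))
    (hL : ∀ z2 z3, L z2 z3
      = ℓ + z2 • m2 + z3 • m3 - ((1/2) * (z2 * z2 + z3 * z3)) • nn)
    (hM2 : ∀ z2 z3, M2 z2 z3 = m2 - z2 • nn)
    (hM3 : ∀ z2 z3, M3 z2 z3 = m3 - z3 • nn)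
    -- Ψ = C̃₀₂₀₂ + i C̃₀₂₀₃
    (Psi : ℝ → ℝ → ℂ)
    (hPsi : ∀ z2 z3, Psi z2 z3
      = (C ![L z2 z3, M2 z2 z3, L z2 z3, M2 z2 z3] : ℝ)
        + Complex.I * (C ![L z2 z3, M2 z2 z3, L z2 z3, M3 z2 z3] : ℝ)) :
    ∀ z2 z3 : ℝ,
      (1 / (Real.sqrt 2 : ℂ)) *
        (deriv (fun s => Psi s z3) z2 + Complex.I * deriv (fun s => Psi z2 s) z3)
        = 0 := by
  intro z2 z3
  -- componentwise formulas for the rotated frame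
  have hLc : ∀ s t i, L s t i = ℓ i + s * m2 i + t * m3 i - (1/2*(s*s+t*t)) * nn i := by
    intro s t i
    rw [hL]
    simp only [Pi.add_apply, Pi.sub_apply, Pi.smul_apply, smul_eq_mul]
  have hM2c : ∀ s t i, M2 s t i = m2 i - s * nn i := by
    intro s t i
    rw [hM2]
    simp only [Pi.sub_apply, Pi.smul_apply, smul_eq_mul]
  have hM3c : ∀ s t i, M3 s t i = m3 i - t * nn i := by
    intro s t i
    rw [hM3]
    simp only [Pi.sub_apply, Pi.smul_apply, smul_eq_mul]
  have hfc := frame_complete ℓ nn m2 m3 hln hll hnn hlm2 hlm3 hnm2 hnm3 hm22 hm33 hm23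
  -- the trace identity in the rotated frame
  have tr : ∀ a c : Fin 4 → ℝ,
      C ![a, L z2 z3, c, nn] + C ![a, nn, c, L z2 z3] + C ![a, M2 z2 z3, c, M2 z2 z3]
        + C ![a, M3 z2 z3, c, M3 z2 z3] = 0 := by
    intro a c
    have hfin : ∀ i j : Fin 4,
        L z2 z3 i * nn j + nn i * L z2 z3 j + M2 z2 z3 i * M2 z2 z3 j
          + M3 z2 z3 i * M3 z2 z3 j
          = if i = j then (if (i:ℕ) = 0 then (-1:ℝ) else 1) else 0 := by
      intro i j
      rw [← hfc i j, hLc, hLc, hM2c, hM2c, hM3c, hM3c]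
      ring
    rw [bexp C a (L z2 z3) c nn, bexp C a nn c (L z2 z3),
      bexp C a (M2 z2 z3) c (M2 z2 z3), bexp C a (M3 z2 z3) c (M3 z2 z3)]
    simp only [← Finset.sum_add_distrib]
    have step : ∀ i j : Fin 4,
        (L z2 z3 i * nn j) * C ![a, std i, c, std j]
          + (nn i * L z2 z3 j) * C ![a, std i, c, std j]
          + (M2 z2 z3 i * M2 z2 z3 j) * C ![a, std i, c, std j]
          + (M3 z2 z3 i * M3 z2 z3 j) * C ![a, std i, c, std j]
          = if i = j then ((if (i:ℕ) = 0 then (-1:ℝ) else 1) * C ![a, std i, c, std j])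
            else 0 := by
      intro i j
      rw [show (if i = j then ((if (i:ℕ) = 0 then (-1:ℝ) else 1) * C ![a, std i, c, std j])
          else 0) = (if i = j then (if (i:ℕ) = 0 then (-1:ℝ) else 1) else 0)
            * C ![a, std i, c, std j] from by by_cases h : i = j <;> simp [h]]
      linear_combination (hfin i j) * C ![a, std i, c, std j]
    refine Eq.trans (Finset.sum_congr rfl fun i _ => Finset.sum_congr rfl fun j _ => step i j) ?_
    have hinner : ∀ i : Fin 4,
        (∑ j, if i = j then ((if (i:ℕ) = 0 then (-1:ℝ) else 1) * C ![a, std i, c, std j])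
          else 0) = (if (i:ℕ) = 0 then (-1:ℝ) else 1) * C ![a, std i, c, std i] := by
      intro i
      rw [Finset.sum_ite_eq]
      simp
    exact Eq.trans (Finset.sum_congr rfl fun i _ => hinner i) (hT a c)
  -- derivatives of the frame components, direction z₂
  have dL2 : ∀ i, HasDerivAt (fun s => L s z3 i) (M2 z2 z3 i) z2 := by
    intro i
    have heq : (fun s => L s z3 i)
        = fun s : ℝ => ℓ i + s * m2 i + z3 * m3 i - (1/2*(s*s+z3*z3)) * nn i :=
      funext fun s => hLc s z3 i
    rw [heq, hM2c]
    have h1 : HasDerivAt (fun s : ℝ => ℓ i + s * m2 i + z3 * m3 i) (m2 i) z2 := by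
      simpa using (((hasDerivAt_id z2).mul_const (m2 i)).const_add (ℓ i)).add_const (z3 * m3 i)
    have h2 : HasDerivAt (fun s : ℝ => (1/2*(s*s+z3*z3)) * nn i) (z2 * nn i) z2 := by
      have h := ((((hasDerivAt_id z2).fun_mul (hasDerivAt_id z2)).add_const (z3*z3)).const_mul
        (1/2 : ℝ)).mul_const (nn i)
      refine h.congr_deriv ?_
      simp only [id_eq]
      ring
    exact h1.sub h2
  have dM2d2 : ∀ i, HasDerivAt (fun s => M2 s z3 i) ((-nn : Fin 4 → ℝ) i) z2 := by
    intro i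
    have heq : (fun s => M2 s z3 i) = fun s : ℝ => m2 i - s * nn i :=
      funext fun s => hM2c s z3 i
    have h : HasDerivAt (fun s : ℝ => m2 i - s * nn i) (-(nn i)) z2 := by
      simpa using ((hasDerivAt_id z2).mul_const (nn i)).const_sub (m2 i)
    rw [heq]
    simpa [Pi.neg_apply] using h
  have dM3d2 : ∀ i, HasDerivAt (fun s => M3 s z3 i) ((0 : Fin 4 → ℝ) i) z2 := by
    intro i
    have heq : (fun s => M3 s z3 i) = fun _ : ℝ => m3 i - z3 * nn i :=
      funext fun s => hM3c s z3 i
    rw [heq]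
    simpa using hasDerivAt_const z2 (m3 i - z3 * nn i)
  -- derivatives of the frame components, direction z₃
  have dL3 : ∀ i, HasDerivAt (fun s => L z2 s i) (M3 z2 z3 i) z3 := by
    intro i
    have heq : (fun s => L z2 s i)
        = fun s : ℝ => ℓ i + z2 * m2 i + s * m3 i - (1/2*(z2*z2+s*s)) * nn i :=
      funext fun s => hLc z2 s i
    rw [heq, hM3c]
    have h1 : HasDerivAt (fun s : ℝ => ℓ i + z2 * m2 i + s * m3 i) (m3 i) z3 := by
      simpa using ((hasDerivAt_id z3).mul_const (m3 i)).const_add (ℓ i + z2 * m2 i)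
    have h2 : HasDerivAt (fun s : ℝ => (1/2*(z2*z2+s*s)) * nn i) (z3 * nn i) z3 := by
      have h := ((((hasDerivAt_id z3).fun_mul (hasDerivAt_id z3)).const_add (z2*z2)).const_mul
        (1/2 : ℝ)).mul_const (nn i)
      refine h.congr_deriv ?_
      simp only [id_eq]
      ring
    exact h1.sub h2
  have dM2d3 : ∀ i, HasDerivAt (fun s => M2 z2 s i) ((0 : Fin 4 → ℝ) i) z3 := by
    intro i
    have heq : (fun s => M2 z2 s i) = fun _ : ℝ => m2 i - z2 * nn i :=
      funext fun s => hM2c z2 s i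
    rw [heq]
    simpa using hasDerivAt_const z3 (m2 i - z2 * nn i)
  have dM3d3 : ∀ i, HasDerivAt (fun s => M3 z2 s i) ((-nn : Fin 4 → ℝ) i) z3 := by
    intro i
    have heq : (fun s => M3 z2 s i) = fun s : ℝ => m3 i - s * nn i :=
      funext fun s => hM3c z2 s i
    have h : HasDerivAt (fun s : ℝ => m3 i - s * nn i) (-(nn i)) z3 := by
      simpa using ((hasDerivAt_id z3).mul_const (nn i)).const_sub (m3 i)
    rw [heq]
    simpa [Pi.neg_apply] using h
  -- derivatives of the four scalar component functions
  have Hf2 : HasDerivAt (fun t => C ![L t z3, M2 t z3, L t z3, M2 t z3])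
      (C ![M2 z2 z3, M2 z2 z3, L z2 z3, M2 z2 z3] + C ![L z2 z3, -nn, L z2 z3, M2 z2 z3]
        + C ![L z2 z3, M2 z2 z3, M2 z2 z3, M2 z2 z3]
        + C ![L z2 z3, M2 z2 z3, L z2 z3, -nn]) z2 :=
    hasDerivAt_C4 C (fun t => L t z3) (fun t => M2 t z3) (fun t => L t z3) (fun t => M2 t z3)
      (M2 z2 z3) (-nn) (M2 z2 z3) (-nn) z2 dL2 dM2d2 dL2 dM2d2
  have Hg2 : HasDerivAt (fun t => C ![L t z3, M2 t z3, L t z3, M3 t z3])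
      (C ![M2 z2 z3, M2 z2 z3, L z2 z3, M3 z2 z3] + C ![L z2 z3, -nn, L z2 z3, M3 z2 z3]
        + C ![L z2 z3, M2 z2 z3, M2 z2 z3, M3 z2 z3]
        + C ![L z2 z3, M2 z2 z3, L z2 z3, (0 : Fin 4 → ℝ)]) z2 :=
    hasDerivAt_C4 C (fun t => L t z3) (fun t => M2 t z3) (fun t => L t z3) (fun t => M3 t z3)
      (M2 z2 z3) (-nn) (M2 z2 z3) 0 z2 dL2 dM2d2 dL2 dM3d2
  have Hf3 : HasDerivAt (fun t => C ![L z2 t, M2 z2 t, L z2 t, M2 z2 t])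
      (C ![M3 z2 z3, M2 z2 z3, L z2 z3, M2 z2 z3]
        + C ![L z2 z3, (0 : Fin 4 → ℝ), L z2 z3, M2 z2 z3]
        + C ![L z2 z3, M2 z2 z3, M3 z2 z3, M2 z2 z3]
        + C ![L z2 z3, M2 z2 z3, L z2 z3, (0 : Fin 4 → ℝ)]) z3 :=
    hasDerivAt_C4 C (fun t => L z2 t) (fun t => M2 z2 t) (fun t => L z2 t) (fun t => M2 z2 t)
      (M3 z2 z3) 0 (M3 z2 z3) 0 z3 dL3 dM2d3 dL3 dM2d3
  have Hg3 : HasDerivAt (fun t => C ![L z2 t, M2 z2 t, L z2 t, M3 z2 t])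
      (C ![M3 z2 z3, M2 z2 z3, L z2 z3, M3 z2 z3]
        + C ![L z2 z3, (0 : Fin 4 → ℝ), L z2 z3, M3 z2 z3]
        + C ![L z2 z3, M2 z2 z3, M3 z2 z3, M3 z2 z3]
        + C ![L z2 z3, M2 z2 z3, L z2 z3, -nn]) z3 :=
    hasDerivAt_C4 C (fun t => L z2 t) (fun t => M2 z2 t) (fun t => L z2 t) (fun t => M3 z2 t)
      (M3 z2 z3) 0 (M3 z2 z3) (-nn) z3 dL3 dM2d3 dL3 dM3d3
  -- derivatives of Ψ
  have hPsiFun2 : (fun s => Psi s z3)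
      = fun s => ((C ![L s z3, M2 s z3, L s z3, M2 s z3] : ℝ) : ℂ)
        + Complex.I * ((C ![L s z3, M2 s z3, L s z3, M3 s z3] : ℝ) : ℂ) :=
    funext fun s => hPsi s z3
  have hPsiFun3 : (fun s => Psi z2 s)
      = fun s => ((C ![L z2 s, M2 z2 s, L z2 s, M2 z2 s] : ℝ) : ℂ)
        + Complex.I * ((C ![L z2 s, M2 z2 s, L z2 s, M3 z2 s] : ℝ) : ℂ) :=
    funext fun s => hPsi z2 s
  have D2 : HasDerivAt (fun s => Psi s z3)
      (((C ![M2 z2 z3, M2 z2 z3, L z2 z3, M2 z2 z3] + C ![L z2 z3, -nn, L z2 z3, M2 z2 z3]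
        + C ![L z2 z3, M2 z2 z3, M2 z2 z3, M2 z2 z3]
        + C ![L z2 z3, M2 z2 z3, L z2 z3, -nn] : ℝ) : ℂ)
      + Complex.I * ((C ![M2 z2 z3, M2 z2 z3, L z2 z3, M3 z2 z3]
        + C ![L z2 z3, -nn, L z2 z3, M3 z2 z3]
        + C ![L z2 z3, M2 z2 z3, M2 z2 z3, M3 z2 z3]
        + C ![L z2 z3, M2 z2 z3, L z2 z3, (0 : Fin 4 → ℝ)] : ℝ) : ℂ)) z2 := by
    rw [hPsiFun2]
    exact (Hf2.ofReal_comp).add ((Hg2.ofReal_comp).const_mul Complex.I)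
  have D3 : HasDerivAt (fun s => Psi z2 s)
      (((C ![M3 z2 z3, M2 z2 z3, L z2 z3, M2 z2 z3]
        + C ![L z2 z3, (0 : Fin 4 → ℝ), L z2 z3, M2 z2 z3]
        + C ![L z2 z3, M2 z2 z3, M3 z2 z3, M2 z2 z3]
        + C ![L z2 z3, M2 z2 z3, L z2 z3, (0 : Fin 4 → ℝ)] : ℝ) : ℂ)
      + Complex.I * ((C ![M3 z2 z3, M2 z2 z3, L z2 z3, M3 z2 z3]
        + C ![L z2 z3, (0 : Fin 4 → ℝ), L z2 z3, M3 z2 z3]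
        + C ![L z2 z3, M2 z2 z3, M3 z2 z3, M3 z2 z3]
        + C ![L z2 z3, M2 z2 z3, L z2 z3, -nn] : ℝ) : ℂ)) z3 := by
    rw [hPsiFun3]
    exact (Hf3.ofReal_comp).add ((Hg3.ofReal_comp).const_mul Complex.I)
  -- algebraic identities
  have hA2 : ∀ a b c d, C ![a,b,c,d] = -C ![a,b,d,c] := fun a b c d => by
    rw [hP a b c d, hA c d a b, hP d c a b]
  have zb : ∀ a c d : Fin 4 → ℝ, C ![a, (0 : Fin 4 → ℝ), c, d] = 0 := fun a c d =>
    C.map_coord_zero 1 (by simp)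
  have zd : ∀ a b c : Fin 4 → ℝ, C ![a, b, c, (0 : Fin 4 → ℝ)] = 0 := fun a b c =>
    C.map_coord_zero 3 (by simp)
  have nb : ∀ a c d : Fin 4 → ℝ, C ![a, -nn, c, d] = -C ![a, nn, c, d] := by
    intro a c d
    have h := C.map_update_neg ![a, nn, c, d] 1 nn
    rw [upd1, upd1] at h
    exact h
  have nd : ∀ a b c : Fin 4 → ℝ, C ![a, b, c, -nn] = -C ![a, b, c, nn] := by
    intro a b c
    have h := C.map_update_neg ![a, b, c, nn] 3 nn
    rw [upd3, upd3] at h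
    exact h
  have t1 := tr (L z2 z3) (M2 z2 z3)
  have t2 := tr (L z2 z3) (M3 z2 z3)
  -- final combination
  have key : ∀ x y z w : ℝ, x - w = 0 → y + z = 0 →
      (1 / (Real.sqrt 2 : ℂ)) * (((x : ℝ) : ℂ) + Complex.I * ((y : ℝ) : ℂ)
        + Complex.I * (((z : ℝ) : ℂ) + Complex.I * ((w : ℝ) : ℂ))) = 0 := by
    intro x y z w h1 h2
    have hx : x = w := by linarith
    have hy : y = -z := by linarith
    rw [hx, hy]
    push_cast
    linear_combination (1 / (Real.sqrt 2 : ℂ)) * (w : ℂ) * Complex.I_sq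
  rw [D2.deriv, D3.deriv]
  refine key _ _ _ _ ?_ ?_
  · linarith [hA (M2 z2 z3) (M2 z2 z3) (L z2 z3) (M2 z2 z3),
      hP (L z2 z3) (M2 z2 z3) (M2 z2 z3) (M2 z2 z3),
      hA2 (L z2 z3) (M2 z2 z3) (M3 z2 z3) (M3 z2 z3),
      hA (L z2 z3) (L z2 z3) (M2 z2 z3) nn,
      hA2 (L z2 z3) nn (M2 z2 z3) (L z2 z3),
      hP (M3 z2 z3) (M2 z2 z3) (L z2 z3) (M3 z2 z3),
      hA2 (L z2 z3) (M3 z2 z3) (M3 z2 z3) (M2 z2 z3),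
      t1,
      nb (L z2 z3) (L z2 z3) (M2 z2 z3),
      nd (L z2 z3) (M2 z2 z3) (L z2 z3),
      zb (L z2 z3) (L z2 z3) (M3 z2 z3)]
  · linarith [hA (M2 z2 z3) (M2 z2 z3) (L z2 z3) (M3 z2 z3),
      nb (L z2 z3) (L z2 z3) (M3 z2 z3),
      hP (L z2 z3) (M2 z2 z3) (M2 z2 z3) (M3 z2 z3),
      hA (M3 z2 z3) (M2 z2 z3) (L z2 z3) (M2 z2 z3),
      zd (L z2 z3) (M2 z2 z3) (L z2 z3),
      zb (L z2 z3) (L z2 z3) (M2 z2 z3),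
      t2,
      hA (L z2 z3) (L z2 z3) (M3 z2 z3) nn,
      hP (L z2 z3) (M3 z2 z3) (M3 z2 z3) (M3 z2 z3),
      hA (M3 z2 z3) (M3 z2 z3) (L z2 z3) (M3 z2 z3),
      hA2 (L z2 z3) nn (M3 z2 z3) (L z2 z3)]
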